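/- Let e, d be coprime positive integers, n = e+d, J = J_{(e,d)}, and for x ∈ ℂ define Sol((e,d),x) ⊂ sl_n(ℂ)[z] as the set of F of the form F = [[W,X],[Y,Z]] + [[W',0],[Y',Z']]z + [[0,0],[Y'',0]]z² such that, with F₀ = [[W',X],[Y'',Z']] and F_ε = [[W,0],[Y',Z]], one has [F₀,J] + xF₀ + F_ε = 0. Then for any x ∈ ℂ the evaluation map Sol((e,d),x) → sl_n(ℂ), F ↦ F(x), is a linear isomorphism. -/

import Mathlib

open Matrix

/-- The entries of the canonical 0-1 matrix `J_{(e,d)}` defined by the recursion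
`J_{(1,1)} = [[0,1],[0,0]]` together with the block extension rules. -/
noncomputable def Jfun : ℕ → ℕ → ℕ → ℕ → ℂ
  | e, d, i, j =>
    if e = 1 ∧ d = 1 then (if i = 0 ∧ j = 1 then 1 else 0)
    else if h1 : 0 < e ∧ e < d then
      (if i < e then (if j = i + e then 1 else 0)
       else if e ≤ j then Jfun e (d - e) (i - e) (j - e) else 0)
    else if h2 : 0 < d ∧ d < e then
      (if i < e ∧ j < e then Jfun (e - d) d i j
       else if e - d ≤ i ∧ i < e ∧ j = i + d then 1 else 0)
    else 0
  termination_by e d _ _ => e + d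
  decreasing_by all_goals omega

/-- The matrix `F₀` assembled from the coefficients `F = A0 + A1 z + A2 z²` of an element of
`V_{e,d}`: block `I` (rows `< e`, columns `≥ e`) comes from `A0`, block `III`
(rows `≥ e`, columns `< e`) from `A2`, and the diagonal blocks from `A1`. -/
def F0mat (e d : ℕ) (A0 A1 A2 : Matrix (Fin (e + d)) (Fin (e + d)) ℂ) :
    Matrix (Fin (e + d)) (Fin (e + d)) ℂ :=
  Matrix.of fun i j : Fin (e + d) =>
    if (i : ℕ) < e ∧ e ≤ (j : ℕ) then A0 i j
    else if e ≤ (i : ℕ) ∧ (j : ℕ) < e then A2 i j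
    else A1 i j

/-- The matrix `F_ε` assembled from the coefficients of `F`: block `I` is zero, block `III`
comes from `A1`, and the diagonal blocks from `A0`. -/
def Fepsmat (e d : ℕ) (A0 A1 : Matrix (Fin (e + d)) (Fin (e + d)) ℂ) :
    Matrix (Fin (e + d)) (Fin (e + d)) ℂ :=
  Matrix.of fun i j : Fin (e + d) =>
    if (i : ℕ) < e ∧ e ≤ (j : ℕ) then 0
    else if e ≤ (i : ℕ) ∧ (j : ℕ) < e then A1 i j
    else A0 i j

/-- Membership in `Sol((e,d),x)`: `F = A0 + A1 z + A2 z² ∈ V_{e,d} ⊆ sl_n(ℂ)[z]`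
(traceless coefficients, `A1` has vanishing block `I`, `A2` is concentrated in block `III`)
such that `[F₀, J] + x F₀ + F_ε = 0`. -/
def IsSol (e d : ℕ) (J : Matrix (Fin (e + d)) (Fin (e + d)) ℂ) (x : ℂ)
    (A0 A1 A2 : Matrix (Fin (e + d)) (Fin (e + d)) ℂ) : Prop :=
  A0.trace = 0 ∧ A1.trace = 0 ∧ A2.trace = 0 ∧
  (∀ i j : Fin (e + d), (i : ℕ) < e → e ≤ (j : ℕ) → A1 i j = 0) ∧
  (∀ i j : Fin (e + d), ¬(e ≤ (i : ℕ) ∧ (j : ℕ) < e) → A2 i j = 0) ∧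
  (F0mat e d A0 A1 A2 * J - J * F0mat e d A0 A1 A2) + x • F0mat e d A0 A1 A2
    + Fepsmat e d A0 A1 = 0

lemma Jfun_base (i j : ℕ) : Jfun 1 1 i j = if i = 0 ∧ j = 1 then 1 else 0 := by
  rw [Jfun]; simp

lemma Jfun_lt (e d : ℕ) (h0 : 0 < e) (h : e < d) (i j : ℕ) :
    Jfun e d i j = if i < e then (if j = i + e then 1 else 0)
      else if e ≤ j then Jfun e (d - e) (i - e) (j - e) else 0 := by
  rw [Jfun]
  have : ¬(e = 1 ∧ d = 1) := by omega
  simp [this, h0, h]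

lemma Jfun_gt (e d : ℕ) (h0 : 0 < d) (h : d < e) (i j : ℕ) :
    Jfun e d i j = if i < e ∧ j < e then Jfun (e - d) d i j
      else if e - d ≤ i ∧ i < e ∧ j = i + d then 1 else 0 := by
  rw [Jfun]
  have h1 : ¬(e = 1 ∧ d = 1) := by omega
  have h2 : ¬(0 < e ∧ e < d) := by omega
  simp [h1, h2, h0, h]

noncomputable def commN (n : ℕ) (M Jm : ℕ → ℕ → ℂ) (i j : ℕ) : ℂ :=
  ∑ k ∈ Finset.range n, (M i k * Jm k j - Jm i k * M k j)

lemma commN_scalar (n : ℕ) (M Jm : ℕ → ℕ → ℂ) (c : ℂ)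
    (hM : ∀ i j, i < n → j < n → M i j = if i = j then c else 0)
    (i j : ℕ) (hi : i < n) (hj : j < n) : commN n M Jm i j = 0 := by
  unfold commN
  have h : ∀ k ∈ Finset.range n, M i k * Jm k j - Jm i k * M k j
      = (if k = i then Jm k j * c else 0) - (if k = j then Jm i k * c else 0) := by
    intro k hk
    have hk' := Finset.mem_range.mp hk
    rw [hM i k hi hk', hM k j hk' hj]
    split_ifs <;> (first | ring1 | (exfalso; omega) | (subst_vars; (first | ring1 | (exfalso; omega) | simp_all)))
  rw [Finset.sum_congr rfl h, Finset.sum_sub_distrib,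
    Finset.sum_ite_eq' (Finset.range n) i (fun k => Jm k j * c),
    Finset.sum_ite_eq' (Finset.range n) j (fun k => Jm i k * c)]
  simp [Finset.mem_range.mpr hi, Finset.mem_range.mpr hj]

lemma sum_ind_right (n b : ℕ) (f g : ℕ → ℂ)
    (hg : ∀ k, k < n → g k = if k = b then 1 else 0) :
    ∑ k ∈ Finset.range n, f k * g k = if b < n then f b else 0 := by
  have h : ∀ k ∈ Finset.range n, f k * g k = if k = b then f k else 0 := by
    intro k hk
    rw [hg k (Finset.mem_range.mp hk)]
    split_ifs <;> ring
  rw [Finset.sum_congr rfl h, Finset.sum_ite_eq' (Finset.range n) b f]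
  simp [Finset.mem_range]

lemma sum_ind_left (n b : ℕ) (f g : ℕ → ℂ)
    (hg : ∀ k, k < n → g k = if k = b then 1 else 0) :
    ∑ k ∈ Finset.range n, g k * f k = if b < n then f b else 0 := by
  have h : ∀ k ∈ Finset.range n, g k * f k = f k * g k := fun k _ => mul_comm _ _
  rw [Finset.sum_congr rfl h, sum_ind_right n b f g hg]

lemma keyN : ∀ n e d, e + d = n → 0 < e → 0 < d → Nat.Coprime e d →
    ∀ M : ℕ → ℕ → ℂ,
    (∀ i j, i < e → e ≤ j → j < e + d → M i j = 0) →
    (∀ i j, i < e + d → j < e + d → ¬(e ≤ i ∧ j < e) →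
      commN (e + d) M (Jfun e d) i j = 0) →
    ∀ i j, i < e + d → j < e + d → M i j = if i = j then M 0 0 else 0 := by
  intro n
  induction n using Nat.strong_induction_on with
  | _ n IH =>
  intro e d hn he hd hcop M hI hC
  have hsplit : ∀ i j, commN (e+d) M (Jfun e d) i j
      = (∑ k ∈ Finset.range e, (M i k * Jfun e d k j - Jfun e d i k * M k j))
      + ∑ k ∈ Finset.range d, (M i (e+k) * Jfun e d (e+k) j
          - Jfun e d i (e+k) * M (e+k) j) := by
    intro i j; unfold commN; rw [Finset.sum_range_add]
  rcases lt_trichotomy e d with hlt | heq | hgt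
  · -- case e < d
    have hdd : e + (d - e) = d := by omega
    have hJ1 : ∀ i j, i < e → Jfun e d i j = if j = i + e then 1 else 0 := by
      intro i j hi; rw [Jfun_lt e d he hlt, if_pos hi]
    have hJ2 : ∀ i j, e ≤ i →
        Jfun e d i j = if e ≤ j then Jfun e (d-e) (i-e) (j-e) else 0 := by
      intro i j hi; rw [Jfun_lt e d he hlt, if_neg (show ¬ i < e by omega)]
    have hF2 : ∀ i j, i < e → j < e → M (e+i) j = 0 := by
      intro i j hi hj
      have h0 := hC i j (by omega) (by omega) (by omega)
      rw [hsplit] at h0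
      have h1 : ∀ k ∈ Finset.range e,
          (M i k * Jfun e d k j - Jfun e d i k * M k j) = 0 := by
        intro k hk; have hk' := Finset.mem_range.mp hk
        rw [hJ1 k j hk', hJ1 i k hi, if_neg (show ¬ j = k + e by omega),
          if_neg (show ¬ k = i + e by omega)]
        ring
      have h2 : ∀ k ∈ Finset.range d,
          (M i (e+k) * Jfun e d (e+k) j - Jfun e d i (e+k) * M (e+k) j)
          = if k = i then -M (e+k) j else 0 := by
        intro k hk
        rw [hJ2 (e+k) j (show e ≤ e+k by omega), if_neg (show ¬ e ≤ j by omega),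
          hJ1 i (e+k) hi]
        have hcond : (e + k = i + e) = (k = i) :=
          propext ⟨fun h => by omega, fun h => by omega⟩
        simp only [hcond]
        split_ifs <;> ring
      rw [Finset.sum_congr rfl h1, Finset.sum_congr rfl h2,
        Finset.sum_ite_eq' (Finset.range d) i (fun k => -M (e+k) j),
        if_pos (Finset.mem_range.mpr (show i < d by omega))] at h0
      simpa using h0
    have hF1 : ∀ i j, i < e → j < d →
        M (e+i) (e+j) = (if j < e then M i j else 0) := by
      intro i j hi hj
      have h0 := hC i (e+j) (by omega) (by omega) (by omega)
      rw [hsplit] at h0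
      have h1 : ∀ k ∈ Finset.range e,
          (M i k * Jfun e d k (e+j) - Jfun e d i k * M k (e+j))
          = if k = j then M i k else 0 := by
        intro k hk; have hk' := Finset.mem_range.mp hk
        rw [hJ1 k (e+j) hk', hJ1 i k hi, if_neg (show ¬ k = i + e by omega)]
        have hcond : (e + j = k + e) = (k = j) :=
          propext ⟨fun h => by omega, fun h => by omega⟩
        simp only [hcond]
        split_ifs <;> ring
      have h2 : ∀ k ∈ Finset.range d,
          (M i (e+k) * Jfun e d (e+k) (e+j) - Jfun e d i (e+k) * M (e+k) (e+j))
          = if k = i then -M (e+k) (e+j) else 0 := by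
        intro k hk; have hk' := Finset.mem_range.mp hk
        rw [hI i (e+k) hi (show e ≤ e+k by omega) (show e+k < e+d by omega),
          hJ1 i (e+k) hi]
        have hcond : (e + k = i + e) = (k = i) :=
          propext ⟨fun h => by omega, fun h => by omega⟩
        simp only [hcond]
        split_ifs <;> ring
      rw [Finset.sum_congr rfl h1, Finset.sum_congr rfl h2,
        Finset.sum_ite_eq' (Finset.range e) j (fun k => M i k),
        Finset.sum_ite_eq' (Finset.range d) i (fun k => -M (e+k) (e+j)),
        if_pos (Finset.mem_range.mpr (show i < d by omega))] at h0
      simp only [Finset.mem_range] at h0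
      linear_combination -h0
    have hcm : ∀ i j, i < d → j < d → commN (e+d) M (Jfun e d) (e+i) (e+j)
        = (if j < e then M (e+i) j else 0)
          + commN d (fun a b => M (e+a) (e+b)) (Jfun e (d-e)) i j := by
      intro i j hi hj
      rw [hsplit]
      congr 1
      · have h1 : ∀ k ∈ Finset.range e,
            (M (e+i) k * Jfun e d k (e+j) - Jfun e d (e+i) k * M k (e+j))
            = if k = j then M (e+i) k else 0 := by
          intro k hk; have hk' := Finset.mem_range.mp hk
          rw [hJ1 k (e+j) hk', hJ2 (e+i) k (show e ≤ e+i by omega),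
            if_neg (show ¬ e ≤ k by omega)]
          have hcond : (e + j = k + e) = (k = j) :=
            propext ⟨fun h => by omega, fun h => by omega⟩
          simp only [hcond]
          split_ifs <;> ring
        rw [Finset.sum_congr rfl h1,
          Finset.sum_ite_eq' (Finset.range e) j (fun k => M (e+i) k)]
        simp [Finset.mem_range]
      · unfold commN
        refine Finset.sum_congr rfl fun k hk => ?_
        rw [hJ2 (e+k) (e+j) (show e ≤ e+k by omega),
          if_pos (show e ≤ e+j by omega),
          hJ2 (e+i) (e+k) (show e ≤ e+i by omega),
          if_pos (show e ≤ e+k by omega)]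
        simp
    have hI' : ∀ i j, i < e → e ≤ j → j < e + (d-e) → M (e+i) (e+j) = 0 := by
      intro i j hi hj hj2
      rw [hF1 i j hi (by omega), if_neg (show ¬ j < e by omega)]
    have hC' : ∀ i j, i < e + (d-e) → j < e + (d-e) → ¬(e ≤ i ∧ j < e) →
        commN (e + (d-e)) (fun a b => M (e+a) (e+b)) (Jfun e (d-e)) i j = 0 := by
      intro i j hi hj hreg
      rw [hdd]
      have h0 := hcm i j (by omega) (by omega)
      rw [hC (e+i) (e+j) (by omega) (by omega) (by omega)] at h0
      have h2 : (if j < e then M (e+i) j else 0) = 0 := by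
        split_ifs with hje
        · exact hF2 i j (by omega) hje
        · rfl
      rw [h2] at h0
      simpa using h0.symm
    have hcop' : Nat.Coprime e (d - e) := by
      have h1 : Nat.gcd e (d - e) = Nat.gcd e ((d-e)+e) :=
        (Nat.gcd_add_self_right e (d-e)).symm
      unfold Nat.Coprime at *
      rw [h1, show (d-e)+e = d from by omega]; exact hcop
    have hIH := IH d (by omega) e (d-e) hdd he (by omega) hcop'
      (fun a b => M (e+a) (e+b)) hI' hC'
    have hee : M (e+0) (e+0) = M 0 0 := by
      have h := hF1 0 0 he (by omega)
      rw [if_pos he] at h; exact h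
    have hIH' : ∀ i j, i < d → j < d → M (e+i) (e+j) = if i = j then M 0 0 else 0 := by
      intro i j hi hj
      have h := hIH i j (by omega) (by omega)
      rw [h, hee]
    have hscal : ∀ i j, i < d → j < d →
        commN d (fun a b => M (e+a) (e+b)) (Jfun e (d-e)) i j = 0 := by
      intro i j hi hj
      exact commN_scalar d _ _ (M 0 0) (fun a b ha hb => hIH' a b ha hb) i j hi hj
    have hF3 : ∀ i j, i < d → j < e → M (e+i) j = 0 := by
      intro i j hi hj
      have h0 := hcm i j hi (by omega)
      rw [hC (e+i) (e+j) (by omega) (by omega) (by omega),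
        hscal i j hi (by omega), if_pos hj] at h0
      simpa using h0.symm
    intro i j hi hj
    by_cases hie : i < e <;> by_cases hje : j < e
    · have h1 := hF1 i j hie (by omega)
      rw [if_pos hje] at h1
      rw [← h1]
      exact hIH' i j (by omega) (by omega)
    · rw [hI i j hie (by omega) (by omega), if_neg (show ¬ i = j by omega)]
    · have h1 := hF3 (i-e) j (by omega) hje
      rw [show e+(i-e) = i from by omega] at h1
      rw [h1, if_neg (show ¬ i = j by omega)]
    · have h1 := hIH' (i-e) (j-e) (by omega) (by omega)
      rw [show e+(i-e) = i from by omega, show e+(j-e) = j from by omega] at h1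
      rw [h1]
      have hcond : (i - e = j - e) = (i = j) :=
        propext ⟨fun h => by omega, fun h => by omega⟩
      simp only [hcond]
  · -- case e = d : then e = d = 1
    subst heq
    have he1 : e = 1 := by
      unfold Nat.Coprime at hcop
      rwa [Nat.gcd_self] at hcop
    subst he1
    have h01 : M 0 1 = 0 := hI 0 1 (by omega) (by omega) (by omega)
    have c00 := hC 0 0 (by omega) (by omega) (by omega)
    have c01 := hC 0 1 (by omega) (by omega) (by omega)
    have c11 := hC 1 1 (by omega) (by omega) (by omega)
    unfold commN at c00 c01 c11
    rw [show (1+1 : ℕ) = 2 from rfl] at c00 c01 c11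
    rw [Finset.sum_range_succ, Finset.sum_range_one] at c00 c01 c11
    simp only [Jfun_base] at c00 c01 c11
    norm_num at c00 c01 c11
    clear hC hI hsplit IH hcop hn he hd
    intro i j hi hj
    interval_cases i <;> interval_cases j <;> simp_all <;> linear_combination -c01
  · -- case d < e
    have hcol : ∀ k j, k < e → j < d →
        Jfun e d k (e+j) = if k = (e-d)+j then 1 else 0 := by
      intro k j hk hj
      rw [Jfun_gt e d hd hgt, if_neg (show ¬ (k < e ∧ e+j < e) by omega)]
      have hcond : (e-d ≤ k ∧ k < e ∧ e + j = k + d) = (k = (e-d)+j) :=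
        propext ⟨fun h => by omega, fun h => by omega⟩
      simp only [hcond]
    have hrow : ∀ k j, Jfun e d (e+k) j = 0 := by
      intro k j
      rw [Jfun_gt e d hd hgt, if_neg (show ¬ (e+k < e ∧ j < e) by omega),
        if_neg (show ¬ (e-d ≤ e+k ∧ e+k < e ∧ j = e+k+d) by omega)]
    have hIcol : ∀ i k, i < e →
        Jfun e d i (e+k) = if e-d ≤ i ∧ e+k = i+d then 1 else 0 := by
      intro i k hi
      rw [Jfun_gt e d hd hgt, if_neg (show ¬ (i < e ∧ e+k < e) by omega)]
      have hcond : (e-d ≤ i ∧ i < e ∧ e+k = i+d) = (e-d ≤ i ∧ e+k = i+d) :=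
        propext ⟨fun h => ⟨h.1, h.2.2⟩, fun h => ⟨h.1, hi, h.2⟩⟩
      simp only [hcond]
    have hJ3 : ∀ i j, i < e → j < e → Jfun e d i j = Jfun (e-d) d i j := by
      intro i j hi hj
      rw [Jfun_gt e d hd hgt, if_pos ⟨hi, hj⟩]
    have hsum2 : ∀ i c, i < e →
        (∑ k ∈ Finset.range d, (if e-d ≤ i ∧ e+k = i+d then 1 else 0) * M (e+k) c)
        = (if e-d ≤ i then M (e+(i-(e-d))) c else 0) := by
      intro i c hi
      by_cases hge : e-d ≤ i
      · have h1 : ∀ k ∈ Finset.range d,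
            (if e-d ≤ i ∧ e+k = i+d then 1 else 0) * M (e+k) c
            = if k = i-(e-d) then M (e+k) c else 0 := by
          intro k hk
          have hcond : (e-d ≤ i ∧ e+k = i+d) = (k = i-(e-d)) :=
            propext ⟨fun h => by omega, fun h => by omega⟩
          simp only [hcond]
          split_ifs <;> ring
        rw [Finset.sum_congr rfl h1,
          Finset.sum_ite_eq' (Finset.range d) (i-(e-d)) (fun k => M (e+k) c),
          if_pos (Finset.mem_range.mpr (show i-(e-d) < d by omega)), if_pos hge]
      · have h1 : ∀ k ∈ Finset.range d,
            (if e-d ≤ i ∧ e+k = i+d then 1 else 0) * M (e+k) c = 0 := by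
          intro k hk; rw [if_neg (show ¬ (e-d ≤ i ∧ e+k = i+d) by omega)]; ring
        rw [Finset.sum_congr rfl h1, if_neg hge]
        simp
    have hArel : ∀ i j, i < e → j < d → commN (e+d) M (Jfun e d) i (e+j)
        = M i ((e-d)+j) - (if e-d ≤ i then M (e+(i-(e-d))) (e+j) else 0) := by
      intro i j hi hj
      rw [hsplit]
      have h1 : ∀ k ∈ Finset.range e,
          (M i k * Jfun e d k (e+j) - Jfun e d i k * M k (e+j))
          = if k = (e-d)+j then M i k else 0 := by
        intro k hk; have hk' := Finset.mem_range.mp hk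
        rw [hcol k j hk' hj, hI k (e+j) hk' (show e ≤ e+j by omega)
          (show e+j < e+d by omega)]
        split_ifs <;> ring
      have h2 : ∀ k ∈ Finset.range d,
          (M i (e+k) * Jfun e d (e+k) (e+j) - Jfun e d i (e+k) * M (e+k) (e+j))
          = -((if e-d ≤ i ∧ e+k = i+d then 1 else 0) * M (e+k) (e+j)) := by
        intro k hk
        rw [hrow k (e+j), hIcol i k hi]; ring
      rw [Finset.sum_congr rfl h1, Finset.sum_congr rfl h2,
        Finset.sum_ite_eq' (Finset.range e) ((e-d)+j) (fun k => M i k),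
        if_pos (Finset.mem_range.mpr (show (e-d)+j < e by omega)),
        Finset.sum_neg_distrib, hsum2 i (e+j) hi]
      ring
    have hD2 : ∀ i j, i < d → j < d →
        commN (e+d) M (Jfun e d) (e+i) (e+j) = M (e+i) ((e-d)+j) := by
      intro i j hi hj
      rw [hsplit]
      have h1 : ∀ k ∈ Finset.range e,
          (M (e+i) k * Jfun e d k (e+j) - Jfun e d (e+i) k * M k (e+j))
          = if k = (e-d)+j then M (e+i) k else 0 := by
        intro k hk; have hk' := Finset.mem_range.mp hk
        rw [hcol k j hk' hj, hrow i k]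
        split_ifs <;> ring
      have h2 : ∀ k ∈ Finset.range d,
          (M (e+i) (e+k) * Jfun e d (e+k) (e+j)
            - Jfun e d (e+i) (e+k) * M (e+k) (e+j)) = 0 := by
        intro k hk
        rw [hrow k (e+j), hrow i (e+k)]; ring
      rw [Finset.sum_congr rfl h1, Finset.sum_congr rfl h2,
        Finset.sum_ite_eq' (Finset.range e) ((e-d)+j) (fun k => M (e+i) k),
        if_pos (Finset.mem_range.mpr (show (e-d)+j < e by omega))]
      simp
    have hcm2 : ∀ i j, i < e → j < e → commN (e+d) M (Jfun e d) i j
        = commN e M (Jfun (e-d) d) i j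
          - (if e-d ≤ i then M (e+(i-(e-d))) j else 0) := by
      intro i j hi hj
      rw [hsplit]
      have h1 : ∀ k ∈ Finset.range e,
          (M i k * Jfun e d k j - Jfun e d i k * M k j)
          = (M i k * Jfun (e-d) d k j - Jfun (e-d) d i k * M k j) := by
        intro k hk; have hk' := Finset.mem_range.mp hk
        rw [hJ3 k j hk' hj, hJ3 i k hi hk']
      have h2 : ∀ k ∈ Finset.range d,
          (M i (e+k) * Jfun e d (e+k) j - Jfun e d i (e+k) * M (e+k) j)
          = -((if e-d ≤ i ∧ e+k = i+d then 1 else 0) * M (e+k) j) := by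
        intro k hk
        rw [hrow k j, hIcol i k hi]; ring
      rw [Finset.sum_congr rfl h1, Finset.sum_congr rfl h2,
        Finset.sum_neg_distrib, hsum2 i j hi]
      unfold commN
      ring
    have hF2' : ∀ i j, i < d → j < d → M (e+i) ((e-d)+j) = 0 := by
      intro i j hi hj
      have h0 := hD2 i j hi hj
      rw [hC (e+i) (e+j) (by omega) (by omega) (by omega)] at h0
      exact h0.symm
    have hI'' : ∀ i j, i < e-d → e-d ≤ j → j < (e-d)+d → M i j = 0 := by
      intro i j hi hj hj2
      have h0 := hArel i (j-(e-d)) (by omega) (by omega)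
      rw [hC i (e+(j-(e-d))) (by omega) (by omega) (by omega)] at h0
      rw [if_neg (show ¬ e-d ≤ i by omega),
        show (e-d)+(j-(e-d)) = j from by omega] at h0
      simpa using h0.symm
    have hC'' : ∀ i j, i < (e-d)+d → j < (e-d)+d → ¬(e-d ≤ i ∧ j < e-d) →
        commN ((e-d)+d) M (Jfun (e-d) d) i j = 0 := by
      intro i j hi hj hreg
      rw [show (e-d)+d = e from by omega]
      have h0 := hcm2 i j (by omega) (by omega)
      rw [hC i j (by omega) (by omega) (by omega)] at h0
      have h2 : (if e-d ≤ i then M (e+(i-(e-d))) j else 0) = 0 := by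
        split_ifs with hge
        · have h3 := hF2' (i-(e-d)) (j-(e-d)) (by omega) (by omega)
          rw [show (e-d)+(j-(e-d)) = j from by omega] at h3
          exact h3
        · rfl
      rw [h2] at h0
      simpa using h0.symm
    have hcop'' : Nat.Coprime (e-d) d := by
      have h1 : Nat.gcd ((e-d)+d) d = Nat.gcd (e-d) d := Nat.gcd_add_self_left _ _
      unfold Nat.Coprime at *
      rw [← h1, show (e-d)+d = e from by omega]; exact hcop
    have hIH := IH e (by omega) (e-d) d (by omega) (by omega) hd hcop'' M hI'' hC''
    have hIH' : ∀ i j, i < e → j < e → M i j = if i = j then M 0 0 else 0 := by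
      intro i j hi hj
      exact hIH i j (by omega) (by omega)
    have hscal : ∀ i j, i < e → j < e → commN e M (Jfun (e-d) d) i j = 0 := by
      intro i j hi hj
      exact commN_scalar e M _ (M 0 0) (fun a b ha hb => hIH' a b ha hb) i j hi hj
    have hF3' : ∀ i j, e-d ≤ i → i < e → j < e → M (e+(i-(e-d))) j = 0 := by
      intro i j hge hi hj
      have h0 := hcm2 i j hi hj
      rw [hC i j (by omega) (by omega) (by omega), hscal i j hi hj,
        if_pos hge] at h0
      simpa using h0.symm
    intro i j hi hj
    by_cases hie : i < e <;> by_cases hje : j < e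
    · rw [hIH' i j hie hje]
    · rw [hI i j hie (by omega) (by omega), if_neg (show ¬ i = j by omega)]
    · have h1 := hF3' (i-d) j (by omega) (by omega) hje
      rw [show e+((i-d)-(e-d)) = i from by omega] at h1
      rw [h1, if_neg (show ¬ i = j by omega)]
    · have h0 := hArel ((e-d)+(i-e)) (j-e) (by omega) (by omega)
      rw [hC ((e-d)+(i-e)) (e+(j-e)) (by omega) (by omega) (by omega),
        if_pos (show e-d ≤ (e-d)+(i-e) by omega)] at h0
      rw [show (e-d)+(i-e)-(e-d) = i-e from by omega,
        show e+(i-e) = i from by omega, show e+(j-e) = j from by omega] at h0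
      have h1 := hIH' ((e-d)+(i-e)) ((e-d)+(j-e)) (by omega) (by omega)
      rw [h1] at h0
      have hcond : ((e-d)+(i-e) = (e-d)+(j-e)) = (i = j) :=
        propext ⟨fun h => by omega, fun h => by omega⟩
      simp only [hcond] at h0
      linear_combination h0

open Matrix in
lemma keyFin (e d : ℕ) (he : 0 < e) (hd : 0 < d) (hcop : Nat.Coprime e d)
    (J : Matrix (Fin (e+d)) (Fin (e+d)) ℂ)
    (hJ : J = Matrix.of fun i j : Fin (e+d) => Jfun e d (i : ℕ) (j : ℕ))
    (M : Matrix (Fin (e+d)) (Fin (e+d)) ℂ)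
    (hIz : ∀ i j : Fin (e+d), (i:ℕ) < e → e ≤ (j:ℕ) → M i j = 0)
    (hCz : ∀ i j : Fin (e+d), ¬(e ≤ (i:ℕ) ∧ (j:ℕ) < e) → (M*J - J*M) i j = 0)
    (ht : M.trace = 0) : M = 0 := by
  set MN : ℕ → ℕ → ℂ :=
    fun a b => if h : a < e+d ∧ b < e+d then M ⟨a, h.1⟩ ⟨b, h.2⟩ else 0 with hMN
  have hentry : ∀ (i j : Fin (e+d)), MN (i:ℕ) (j:ℕ) = M i j := by
    intro i j
    simp [hMN, i.isLt, j.isLt]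
  have key : ∀ i j : Fin (e+d),
      commN (e+d) MN (Jfun e d) (i:ℕ) (j:ℕ) = (M*J - J*M) i j := by
    intro i j
    unfold commN
    rw [← Fin.sum_univ_eq_sum_range
      (fun a => MN (i:ℕ) a * Jfun e d a (j:ℕ) - Jfun e d (i:ℕ) a * MN a (j:ℕ)) (e+d)]
    rw [Matrix.sub_apply, Matrix.mul_apply, Matrix.mul_apply, ← Finset.sum_sub_distrib]
    refine (Finset.sum_congr rfl fun k _ => ?_).symm
    simp only [hJ, Matrix.of_apply, hentry]
  have hI' : ∀ a b, a < e → e ≤ b → b < e + d → MN a b = 0 := by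
    intro a b ha hb hb2
    have h : a < e+d ∧ b < e+d := ⟨by omega, hb2⟩
    rw [hMN]
    simp only [dif_pos h]
    exact hIz ⟨a, h.1⟩ ⟨b, h.2⟩ ha hb
  have hC' : ∀ a b, a < e + d → b < e + d → ¬(e ≤ a ∧ b < e) →
      commN (e+d) MN (Jfun e d) a b = 0 := by
    intro a b ha hb hreg
    have := key ⟨a, ha⟩ ⟨b, hb⟩
    rw [this]
    exact hCz ⟨a, ha⟩ ⟨b, hb⟩ hreg
  have hs := keyN (e+d) e d rfl he hd hcop MN hI' hC'
  have hdiag : ∀ i : Fin (e+d), M i i = MN 0 0 := by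
    intro i
    rw [← hentry i i, hs (i:ℕ) (i:ℕ) i.isLt i.isLt, if_pos rfl]
  have htr : ((e+d : ℕ) : ℂ) * MN 0 0 = 0 := by
    rw [← ht]
    unfold Matrix.trace Matrix.diag
    rw [Finset.sum_congr rfl (fun i _ => hdiag i)]
    rw [Finset.sum_const, Finset.card_univ, Fintype.card_fin]
    simp [mul_comm]
  have hc : MN 0 0 = 0 := by
    have hne : ((e+d : ℕ) : ℂ) ≠ 0 := Nat.cast_ne_zero.mpr (by omega)
    exact (mul_eq_zero.mp htr).resolve_left hne
  ext i j
  rw [← hentry i j, hs (i:ℕ) (j:ℕ) i.isLt j.isLt, hc]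
  simp

noncomputable def PhiFun (e d : ℕ) (J : Matrix (Fin (e + d)) (Fin (e + d)) ℂ) (x : ℂ)
    (M : Matrix (Fin (e + d)) (Fin (e + d)) ℂ) : Matrix (Fin (e + d)) (Fin (e + d)) ℂ :=
  Matrix.of fun i j : Fin (e + d) =>
    if (i:ℕ) < e ∧ e ≤ (j:ℕ) then (M*J - J*M) i j + x * M i j
    else if e ≤ (i:ℕ) ∧ (j:ℕ) < e then M j i
    else (M*J - J*M) i j + (if i = j ∧ (i:ℕ) = 0 then M.trace else 0)

noncomputable def PhiL (e d : ℕ) (J : Matrix (Fin (e + d)) (Fin (e + d)) ℂ) (x : ℂ) :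
    Matrix (Fin (e + d)) (Fin (e + d)) ℂ →ₗ[ℂ] Matrix (Fin (e + d)) (Fin (e + d)) ℂ where
  toFun := PhiFun e d J x
  map_add' := by
    intro A B
    ext i j
    simp only [PhiFun, Matrix.of_apply, Matrix.add_apply, Matrix.sub_apply,
      Matrix.add_mul, Matrix.mul_add, Matrix.trace_add]
    split_ifs <;> ring
  map_smul' := by
    intro c A
    ext i j
    simp only [PhiFun, Matrix.of_apply, Matrix.smul_apply, Matrix.sub_apply,
      Matrix.smul_mul, Matrix.mul_smul, Matrix.trace_smul, smul_eq_mul,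
      RingHom.id_apply]
    split_ifs <;> ring

lemma trace_comm_diag_sum (n : ℕ) (M J : Matrix (Fin n) (Fin n) ℂ) :
    ∑ i : Fin n, (M*J - J*M) i i = 0 := by
  have h : (M*J - J*M).trace = 0 := by
    rw [Matrix.trace_sub, Matrix.trace_mul_comm]; ring
  simpa [Matrix.trace, Matrix.diag] using h

lemma Phi_ker (e d : ℕ) (he : 0 < e) (hd : 0 < d) (hcop : Nat.Coprime e d)
    (J : Matrix (Fin (e+d)) (Fin (e+d)) ℂ)
    (hJ : J = Matrix.of fun i j : Fin (e+d) => Jfun e d (i : ℕ) (j : ℕ)) (x : ℂ)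
    (M : Matrix (Fin (e+d)) (Fin (e+d)) ℂ)
    (h : PhiFun e d J x M = 0) : M = 0 := by
  have hent : ∀ i j : Fin (e+d), PhiFun e d J x M i j = 0 := fun i j =>
    Matrix.ext_iff.mpr h i j
  have hIz : ∀ i j : Fin (e+d), (i:ℕ) < e → e ≤ (j:ℕ) → M i j = 0 := by
    intro i j hi hj
    have h0 := hent j i
    simp only [PhiFun, Matrix.of_apply] at h0
    rw [if_neg (show ¬((j:ℕ) < e ∧ e ≤ (i:ℕ)) by omega), if_pos ⟨hj, hi⟩] at h0
    exact h0
  have hdiag : ∀ i : Fin (e+d),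
      (M*J - J*M) i i + (if (i:ℕ) = 0 then M.trace else 0) = 0 := by
    intro i
    have h0 := hent i i
    simp only [PhiFun, Matrix.of_apply] at h0
    rw [if_neg (show ¬((i:ℕ) < e ∧ e ≤ (i:ℕ)) by omega),
      if_neg (show ¬(e ≤ (i:ℕ) ∧ (i:ℕ) < e) by omega)] at h0
    simpa using h0
  have htr : M.trace = 0 := by
    have h2 : ∑ i : Fin (e+d),
        ((M*J - J*M) i i + (if (i:ℕ) = 0 then M.trace else 0)) = 0 := by
      rw [Finset.sum_congr rfl (fun i _ => hdiag i)]; simp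
    rw [Finset.sum_add_distrib, trace_comm_diag_sum] at h2
    have h4 : ∑ i : Fin (e+d), (if (i:ℕ) = 0 then M.trace else 0)
        = M.trace := by
      have hcong : ∀ i : Fin (e+d), (if (i:ℕ) = 0 then M.trace else 0)
          = (if i = (⟨0, by omega⟩ : Fin (e+d)) then M.trace else 0) := by
        intro i
        have hc : ((i:ℕ) = 0) = (i = (⟨0, by omega⟩ : Fin (e+d))) :=
          propext ⟨fun hh => Fin.ext hh, fun hh => by rw [hh]⟩
        simp only [hc]
      rw [Finset.sum_congr rfl (fun i _ => hcong i),
        Finset.sum_ite_eq' Finset.univ _ (fun _ => M.trace),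
        if_pos (Finset.mem_univ _)]
    rw [h4] at h2
    simpa using h2
  have hCz : ∀ i j : Fin (e+d), ¬(e ≤ (i:ℕ) ∧ (j:ℕ) < e) →
      (M*J - J*M) i j = 0 := by
    intro i j hreg
    have h0 := hent i j
    simp only [PhiFun, Matrix.of_apply] at h0
    by_cases h1 : (i:ℕ) < e ∧ e ≤ (j:ℕ)
    · rw [if_pos h1] at h0
      rw [hIz i j h1.1 h1.2] at h0
      linear_combination h0
    · rw [if_neg h1, if_neg hreg] at h0
      by_cases h2 : i = j ∧ (i:ℕ) = 0
      · rw [if_pos h2, htr] at h0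
        linear_combination h0
      · rw [if_neg h2] at h0
        linear_combination h0
  exact keyFin e d he hd hcop J hJ M hIz hCz htr

lemma Phi_surj (e d : ℕ) (he : 0 < e) (hd : 0 < d) (hcop : Nat.Coprime e d)
    (J : Matrix (Fin (e+d)) (Fin (e+d)) ℂ)
    (hJ : J = Matrix.of fun i j : Fin (e+d) => Jfun e d (i : ℕ) (j : ℕ)) (x : ℂ) :
    Function.Surjective (PhiL e d J x) := by
  apply LinearMap.injective_iff_surjective.mp
  intro A B hAB
  have h0 : PhiL e d J x (A - B) = 0 := by
    rw [map_sub, hAB, sub_self]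
  have h1 : A - B = 0 := Phi_ker e d he hd hcop J hJ x (A - B) h0
  exact sub_eq_zero.mp h1

lemma sum_ind_trace (n : ℕ) (hn : 0 < n) (c : ℂ) :
    ∑ i : Fin n, (if (i:ℕ) = 0 then c else 0) = c := by
  have hcong : ∀ i : Fin n, (if (i:ℕ) = 0 then c else 0)
      = (if i = (⟨0, hn⟩ : Fin n) then c else 0) := by
    intro i
    have hc : ((i:ℕ) = 0) = (i = (⟨0, hn⟩ : Fin n)) :=
      propext ⟨fun hh => Fin.ext hh, fun hh => by rw [hh]⟩
    simp only [hc]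
  rw [Finset.sum_congr rfl (fun i _ => hcong i),
    Finset.sum_ite_eq' Finset.univ _ (fun _ => c), if_pos (Finset.mem_univ _)]

theorem stmt_19 (e d : ℕ) (he : 0 < e) (hd : 0 < d) (hcop : Nat.Coprime e d)
    (J : Matrix (Fin (e + d)) (Fin (e + d)) ℂ)
    (hJ : J = Matrix.of fun i j : Fin (e + d) => Jfun e d (i : ℕ) (j : ℕ)) (x : ℂ) :
    (∀ A0 A1 A2 B0 B1 B2 : Matrix (Fin (e + d)) (Fin (e + d)) ℂ,
      IsSol e d J x A0 A1 A2 → IsSol e d J x B0 B1 B2 →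
      A0 + x • A1 + x ^ 2 • A2 = B0 + x • B1 + x ^ 2 • B2 →
      A0 = B0 ∧ A1 = B1 ∧ A2 = B2) ∧
    (∀ G : Matrix (Fin (e + d)) (Fin (e + d)) ℂ, G.trace = 0 →
      ∃ A0 A1 A2, IsSol e d J x A0 A1 A2 ∧ G = A0 + x • A1 + x ^ 2 • A2) := by
  constructor
  · -- injectivity
    intro A0 A1 A2 B0 B1 B2 hA hB hev
    obtain ⟨hA0t, hA1t, hA2t, hA1I, hA2III, hAeq⟩ := hA
    obtain ⟨hB0t, hB1t, hB2t, hB1I, hB2III, hBeq⟩ := hB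
    have hev' := Matrix.ext_iff.mpr hev
    have hAe : ∀ i j : Fin (e+d),
        (F0mat e d A0 A1 A2 * J - J * F0mat e d A0 A1 A2) i j
          + x * F0mat e d A0 A1 A2 i j + Fepsmat e d A0 A1 i j = 0 := by
      intro i j
      have h0 := Matrix.ext_iff.mpr hAeq i j
      simpa [Matrix.add_apply, Matrix.sub_apply, Matrix.smul_apply,
        smul_eq_mul] using h0
    have hBe : ∀ i j : Fin (e+d),
        (F0mat e d B0 B1 B2 * J - J * F0mat e d B0 B1 B2) i j
          + x * F0mat e d B0 B1 B2 i j + Fepsmat e d B0 B1 i j = 0 := by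
      intro i j
      have h0 := Matrix.ext_iff.mpr hBeq i j
      simpa [Matrix.add_apply, Matrix.sub_apply, Matrix.smul_apply,
        smul_eq_mul] using h0
    have hMI : ∀ i j : Fin (e+d), (i:ℕ) < e → e ≤ (j:ℕ) →
        (F0mat e d A0 A1 A2 - F0mat e d B0 B1 B2) i j = 0 := by
      intro i j hi hj
      have h1 := hev' i j
      simp only [Matrix.add_apply, Matrix.smul_apply, smul_eq_mul] at h1
      rw [hA1I i j hi hj, hB1I i j hi hj,
        hA2III i j (show ¬(e ≤ (i:ℕ) ∧ (j:ℕ) < e) by omega),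
        hB2III i j (show ¬(e ≤ (i:ℕ) ∧ (j:ℕ) < e) by omega)] at h1
      have hFAe : F0mat e d A0 A1 A2 i j = A0 i j := by
        simp only [F0mat, Matrix.of_apply]; rw [if_pos ⟨hi, hj⟩]
      have hFBe : F0mat e d B0 B1 B2 i j = B0 i j := by
        simp only [F0mat, Matrix.of_apply]; rw [if_pos ⟨hi, hj⟩]
      rw [Matrix.sub_apply, hFAe, hFBe]
      linear_combination h1
    have hMC : ∀ i j : Fin (e+d), ¬(e ≤ (i:ℕ) ∧ (j:ℕ) < e) →
        ((F0mat e d A0 A1 A2 - F0mat e d B0 B1 B2) * J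
          - J * (F0mat e d A0 A1 A2 - F0mat e d B0 B1 B2)) i j = 0 := by
      intro i j hreg
      have hexp : ((F0mat e d A0 A1 A2 - F0mat e d B0 B1 B2) * J
          - J * (F0mat e d A0 A1 A2 - F0mat e d B0 B1 B2)) i j
          = (F0mat e d A0 A1 A2 * J - J * F0mat e d A0 A1 A2) i j
            - (F0mat e d B0 B1 B2 * J - J * F0mat e d B0 B1 B2) i j := by
        simp only [Matrix.sub_mul, Matrix.mul_sub, Matrix.sub_apply]
        ring
      rw [hexp]
      have hA0' := hAe i j
      have hB0' := hBe i j
      by_cases h1 : (i:ℕ) < e ∧ e ≤ (j:ℕ)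
      · have hFeA : Fepsmat e d A0 A1 i j = 0 := by
          simp only [Fepsmat, Matrix.of_apply]; rw [if_pos h1]
        have hFeB : Fepsmat e d B0 B1 i j = 0 := by
          simp only [Fepsmat, Matrix.of_apply]; rw [if_pos h1]
        have hcc : F0mat e d A0 A1 A2 i j = F0mat e d B0 B1 B2 i j := by
          have := hMI i j h1.1 h1.2
          rw [Matrix.sub_apply, sub_eq_zero] at this
          exact this
        rw [hFeA] at hA0'
        rw [hFeB] at hB0'
        linear_combination hA0' - hB0' - x * hcc
      · have hFeA : Fepsmat e d A0 A1 i j = A0 i j := by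
          simp only [Fepsmat, Matrix.of_apply]; rw [if_neg h1, if_neg hreg]
        have hFeB : Fepsmat e d B0 B1 i j = B0 i j := by
          simp only [Fepsmat, Matrix.of_apply]; rw [if_neg h1, if_neg hreg]
        have hFAe : F0mat e d A0 A1 A2 i j = A1 i j := by
          simp only [F0mat, Matrix.of_apply]; rw [if_neg h1, if_neg hreg]
        have hFBe : F0mat e d B0 B1 B2 i j = B1 i j := by
          simp only [F0mat, Matrix.of_apply]; rw [if_neg h1, if_neg hreg]
        have h2 := hev' i j
        simp only [Matrix.add_apply, Matrix.smul_apply, smul_eq_mul] at h2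
        rw [hA2III i j hreg, hB2III i j hreg] at h2
        rw [hFeA, hFAe] at hA0'
        rw [hFeB, hFBe] at hB0'
        linear_combination hA0' - hB0' - h2
    have hMtr : (F0mat e d A0 A1 A2 - F0mat e d B0 B1 B2).trace = 0 := by
      rw [Matrix.trace_sub]
      have hta : (F0mat e d A0 A1 A2).trace = A1.trace := by
        unfold Matrix.trace Matrix.diag
        refine Finset.sum_congr rfl fun i _ => ?_
        simp only [F0mat, Matrix.of_apply]
        rw [if_neg (show ¬((i:ℕ) < e ∧ e ≤ (i:ℕ)) by omega),
          if_neg (show ¬(e ≤ (i:ℕ) ∧ (i:ℕ) < e) by omega)]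
      have htb : (F0mat e d B0 B1 B2).trace = B1.trace := by
        unfold Matrix.trace Matrix.diag
        refine Finset.sum_congr rfl fun i _ => ?_
        simp only [F0mat, Matrix.of_apply]
        rw [if_neg (show ¬((i:ℕ) < e ∧ e ≤ (i:ℕ)) by omega),
          if_neg (show ¬(e ≤ (i:ℕ) ∧ (i:ℕ) < e) by omega)]
      rw [hta, htb, hA1t, hB1t]; ring
    have hM0 : F0mat e d A0 A1 A2 - F0mat e d B0 B1 B2 = 0 :=
      keyFin e d he hd hcop J hJ _ hMI hMC hMtr
    have hFAB : F0mat e d A0 A1 A2 = F0mat e d B0 B1 B2 := by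
      rwa [sub_eq_zero] at hM0
    have hFe : Fepsmat e d A0 A1 = Fepsmat e d B0 B1 := by
      ext i j
      have hA0' := hAe i j
      have hB0' := hBe i j
      have hcc : F0mat e d A0 A1 A2 i j = F0mat e d B0 B1 B2 i j := by rw [hFAB]
      have hcm : (F0mat e d A0 A1 A2 * J - J * F0mat e d A0 A1 A2) i j
          = (F0mat e d B0 B1 B2 * J - J * F0mat e d B0 B1 B2) i j := by rw [hFAB]
      linear_combination hA0' - hB0' - hcm - x * hcc
    have hFe' := Matrix.ext_iff.mpr hFe
    have hFAB' := Matrix.ext_iff.mpr hFAB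
    have h1 : A1 = B1 := by
      ext i j
      by_cases hI1 : (i:ℕ) < e ∧ e ≤ (j:ℕ)
      · rw [hA1I i j hI1.1 hI1.2, hB1I i j hI1.1 hI1.2]
      · by_cases hIII : e ≤ (i:ℕ) ∧ (j:ℕ) < e
        · have h0 := hFe' i j
          simp only [Fepsmat, Matrix.of_apply, if_neg hI1, if_pos hIII] at h0
          exact h0
        · have h0 := hFAB' i j
          simp only [F0mat, Matrix.of_apply, if_neg hI1, if_neg hIII] at h0
          exact h0
    have h2 : A2 = B2 := by
      ext i j
      by_cases hIII : e ≤ (i:ℕ) ∧ (j:ℕ) < e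
      · have h0 := hFAB' i j
        simp only [F0mat, Matrix.of_apply,
          if_neg (show ¬((i:ℕ) < e ∧ e ≤ (j:ℕ)) by omega), if_pos hIII] at h0
        exact h0
      · rw [hA2III i j hIII, hB2III i j hIII]
    have h0 : A0 = B0 := by
      have h := hev
      rw [h1, h2] at h
      exact add_right_cancel (add_right_cancel h)
    exact ⟨h0, h1, h2⟩
  · -- surjectivity
    intro G hG
    obtain ⟨M, hM⟩ := Phi_surj e d he hd hcop J hJ x
      (Matrix.of fun i j : Fin (e+d) =>
        if (i:ℕ) < e ∧ e ≤ (j:ℕ) then 0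
        else if e ≤ (i:ℕ) ∧ (j:ℕ) < e then G j i else -G i j)
    have hM' : PhiFun e d J x M = Matrix.of fun i j : Fin (e+d) =>
        if (i:ℕ) < e ∧ e ≤ (j:ℕ) then 0
        else if e ≤ (i:ℕ) ∧ (j:ℕ) < e then G j i else -G i j := hM
    have hMent := Matrix.ext_iff.mpr hM'
    have c1 : ∀ i j : Fin (e+d), (i:ℕ) < e → e ≤ (j:ℕ) →
        (M*J - J*M) i j + x * M i j = 0 := by
      intro i j hi hj
      have h0 := hMent i j
      simp only [PhiFun, Matrix.of_apply] at h0
      split_ifs at h0 with hc1 hc2 <;> first | exact h0 | (exfalso; omega)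
    have c2 : ∀ i j : Fin (e+d), e ≤ (i:ℕ) → (j:ℕ) < e → M j i = G j i := by
      intro i j hi hj
      have h0 := hMent i j
      simp only [PhiFun, Matrix.of_apply] at h0
      split_ifs at h0 with hc1 hc2 <;> first | exact h0 | (exfalso; omega)
    have cdiag : ∀ i : Fin (e+d),
        (M*J - J*M) i i + (if (i:ℕ) = 0 then M.trace else 0) = -G i i := by
      intro i
      have h0 := hMent i i
      simp only [PhiFun, Matrix.of_apply,
        if_neg (show ¬((i:ℕ) < e ∧ e ≤ (i:ℕ)) by omega),
        if_neg (show ¬(e ≤ (i:ℕ) ∧ (i:ℕ) < e) by omega)] at h0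
      simpa using h0
    have htrM : M.trace = 0 := by
      have hsum : ∑ i : Fin (e+d),
          ((M*J - J*M) i i + (if (i:ℕ) = 0 then M.trace else 0))
          = ∑ i : Fin (e+d), -G i i :=
        Finset.sum_congr rfl (fun i _ => cdiag i)
      rw [Finset.sum_add_distrib, trace_comm_diag_sum,
        sum_ind_trace (e+d) (by omega) M.trace] at hsum
      have hGsum : ∑ i : Fin (e+d), -G i i = 0 := by
        rw [Finset.sum_neg_distrib]
        have : ∑ i : Fin (e+d), G i i = 0 := by
          simpa [Matrix.trace, Matrix.diag] using hG
        rw [this]; ring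
      rw [hGsum] at hsum
      simpa using hsum
    have c3 : ∀ i j : Fin (e+d), ¬((i:ℕ) < e ∧ e ≤ (j:ℕ)) →
        ¬(e ≤ (i:ℕ) ∧ (j:ℕ) < e) → (M*J - J*M) i j = -G i j := by
      intro i j h1 h2
      have h0 := hMent i j
      simp only [PhiFun, Matrix.of_apply, if_neg h1, if_neg h2] at h0
      by_cases h3 : i = j ∧ (i:ℕ) = 0
      · rw [if_pos h3, htrM] at h0
        simpa using h0
      · rw [if_neg h3] at h0
        simpa using h0
    have htrM' : ∑ i : Fin (e+d), M i i = 0 := by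
      simpa [Matrix.trace, Matrix.diag] using htrM
    refine ⟨Matrix.of (fun i j : Fin (e+d) =>
        if (i:ℕ) < e ∧ e ≤ (j:ℕ) then M i j
        else if e ≤ (i:ℕ) ∧ (j:ℕ) < e then G i j + x * (M*J - J*M) i j
        else -((M*J - J*M) i j + x * M i j)),
      Matrix.of (fun i j : Fin (e+d) =>
        if (i:ℕ) < e ∧ e ≤ (j:ℕ) then 0
        else if e ≤ (i:ℕ) ∧ (j:ℕ) < e then -((M*J - J*M) i j + x * M i j)
        else M i j),
      Matrix.of (fun i j : Fin (e+d) =>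
        if e ≤ (i:ℕ) ∧ (j:ℕ) < e then M i j else 0), ?_, ?_⟩
    · refine ⟨?_, ?_, ?_, ?_, ?_, ?_⟩
      · -- trace A0
        unfold Matrix.trace Matrix.diag
        have hent : ∀ i : Fin (e+d), (Matrix.of (fun i j : Fin (e+d) =>
            if (i:ℕ) < e ∧ e ≤ (j:ℕ) then M i j
            else if e ≤ (i:ℕ) ∧ (j:ℕ) < e then G i j + x * (M*J - J*M) i j
            else -((M*J - J*M) i j + x * M i j))) i i
            = -((M*J - J*M) i i + x * M i i) := by
          intro i
          simp only [Matrix.of_apply]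
          rw [if_neg (show ¬((i:ℕ) < e ∧ e ≤ (i:ℕ)) by omega),
            if_neg (show ¬(e ≤ (i:ℕ) ∧ (i:ℕ) < e) by omega)]
        rw [Finset.sum_congr rfl (fun i _ => hent i), Finset.sum_neg_distrib,
          Finset.sum_add_distrib, trace_comm_diag_sum, ← Finset.mul_sum, htrM']
        ring
      · -- trace A1
        unfold Matrix.trace Matrix.diag
        have hent : ∀ i : Fin (e+d), (Matrix.of (fun i j : Fin (e+d) =>
            if (i:ℕ) < e ∧ e ≤ (j:ℕ) then 0
            else if e ≤ (i:ℕ) ∧ (j:ℕ) < e then -((M*J - J*M) i j + x * M i j)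
            else M i j)) i i = M i i := by
          intro i
          simp only [Matrix.of_apply]
          rw [if_neg (show ¬((i:ℕ) < e ∧ e ≤ (i:ℕ)) by omega),
            if_neg (show ¬(e ≤ (i:ℕ) ∧ (i:ℕ) < e) by omega)]
        rw [Finset.sum_congr rfl (fun i _ => hent i), htrM']
      · -- trace A2
        unfold Matrix.trace Matrix.diag
        have hent : ∀ i : Fin (e+d), (Matrix.of (fun i j : Fin (e+d) =>
            if e ≤ (i:ℕ) ∧ (j:ℕ) < e then M i j else 0)) i i = 0 := by
          intro i
          simp only [Matrix.of_apply]
          rw [if_neg (show ¬(e ≤ (i:ℕ) ∧ (i:ℕ) < e) by omega)]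
        rw [Finset.sum_congr rfl (fun i _ => hent i)]
        simp
      · intro i j hi hj
        simp only [Matrix.of_apply]
        rw [if_pos ⟨hi, hj⟩]
      · intro i j hreg
        simp only [Matrix.of_apply]
        rw [if_neg hreg]
      · -- the differential equation
        have hF0 : F0mat e d (Matrix.of (fun i j : Fin (e+d) =>
            if (i:ℕ) < e ∧ e ≤ (j:ℕ) then M i j
            else if e ≤ (i:ℕ) ∧ (j:ℕ) < e then G i j + x * (M*J - J*M) i j
            else -((M*J - J*M) i j + x * M i j)))
            (Matrix.of (fun i j : Fin (e+d) =>
            if (i:ℕ) < e ∧ e ≤ (j:ℕ) then 0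
            else if e ≤ (i:ℕ) ∧ (j:ℕ) < e then -((M*J - J*M) i j + x * M i j)
            else M i j))
            (Matrix.of (fun i j : Fin (e+d) =>
            if e ≤ (i:ℕ) ∧ (j:ℕ) < e then M i j else 0)) = M := by
          ext i j
          simp only [F0mat, Matrix.of_apply]
          split_ifs with ha hb
          · rfl
          · rfl
          · rfl
        have hFeps : Fepsmat e d (Matrix.of (fun i j : Fin (e+d) =>
            if (i:ℕ) < e ∧ e ≤ (j:ℕ) then M i j
            else if e ≤ (i:ℕ) ∧ (j:ℕ) < e then G i j + x * (M*J - J*M) i j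
            else -((M*J - J*M) i j + x * M i j)))
            (Matrix.of (fun i j : Fin (e+d) =>
            if (i:ℕ) < e ∧ e ≤ (j:ℕ) then 0
            else if e ≤ (i:ℕ) ∧ (j:ℕ) < e then -((M*J - J*M) i j + x * M i j)
            else M i j)) = -((M*J - J*M) + x • M) := by
          ext i j
          simp only [Fepsmat, Matrix.of_apply, Matrix.neg_apply, Matrix.add_apply,
            Matrix.smul_apply, smul_eq_mul]
          split_ifs with ha hb
          · linear_combination c1 i j ha.1 ha.2
          · ring
          · ring
        rw [hF0, hFeps]
        exact add_neg_cancel _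
    · -- evaluation
      ext i j
      simp only [Matrix.add_apply, Matrix.smul_apply, smul_eq_mul, Matrix.of_apply]
      by_cases h1 : (i:ℕ) < e ∧ e ≤ (j:ℕ)
      · rw [if_pos h1, if_pos h1, if_neg (show ¬(e ≤ (i:ℕ) ∧ (j:ℕ) < e) by omega)]
        have hc := c2 j i h1.2 h1.1
        linear_combination -hc
      · by_cases h2 : e ≤ (i:ℕ) ∧ (j:ℕ) < e
        · rw [if_neg h1, if_pos h2, if_neg h1, if_pos h2, if_pos h2]
          ring
        · rw [if_neg h1, if_neg h2, if_neg h1, if_neg h2, if_neg h2]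
          linear_combination c3 i j h1 h2
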